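/- arXiv:2001.10875 — 5 statements merged into one kernel-verified Lean document; each statement's English description precedes it below -/
import Mathlib

section
/- Let I be an SMI instance in which every stable matching matches every man and every woman, and let M_0 be a man-optimal and woman-pessimal stable matching of I. If d_U(M_0) ≥ d_W(M_0), then M_0 is a regret-equal stable matching, i.e., r(M_0) ≤ r(M) for every stable matching M of I. -/
/-- An instance of the Stable Marriage problem with Incomplete lists (SMI):
men `U` and women `W`, each agent ranking a subset of the other side
in strict order of preference (represented as a duplicate-free list,
most-preferred first). -/
structure SMI (U W : Type) where
  mpref : U → List W
  wpref : W → List U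
  mpref_nodup : ∀ m, (mpref m).Nodup
  wpref_nodup : ∀ w, (wpref w).Nodup

namespace SMI

variable {U W : Type}

/-- The (1-based) rank of woman `w` on man `m`'s preference list. -/
def mrank [DecidableEq W] (I : SMI U W) (m : U) (w : W) : ℕ :=
  (I.mpref m).idxOf w + 1

/-- The (1-based) rank of man `m` on woman `w`'s preference list. -/
def wrank [DecidableEq U] (I : SMI U W) (w : W) (m : U) : ℕ :=
  (I.wpref w).idxOf m + 1

/-- `(m, w)` is an acceptable pair if each appears on the other's list. -/
def Acceptable (I : SMI U W) (m : U) (w : W) : Prop :=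
  w ∈ I.mpref m ∧ m ∈ I.wpref w

/-- A matching: a set of acceptable pairs in which every man and every
woman appears at most once. -/
def IsMatching (I : SMI U W) (M : Set (U × W)) : Prop :=
  (∀ p ∈ M, I.Acceptable p.1 p.2) ∧
  (∀ p ∈ M, ∀ q ∈ M, p.1 = q.1 → p = q) ∧
  (∀ p ∈ M, ∀ q ∈ M, p.2 = q.2 → p = q)

/-- Man `m` is matched in `M`. -/
def MMatched (M : Set (U × W)) (m : U) : Prop := ∃ w, (m, w) ∈ M

/-- Woman `w` is matched in `M`. -/
def WMatched (M : Set (U × W)) (w : W) : Prop := ∃ m, (m, w) ∈ M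

/-- `M` matches every man and every woman. -/
def Perfect (M : Set (U × W)) : Prop :=
  (∀ m : U, MMatched M m) ∧ (∀ w : W, WMatched M w)

/-- `(m, w)` is a blocking pair of `M`. -/
def Blocks [DecidableEq U] [DecidableEq W] (I : SMI U W) (M : Set (U × W))
    (m : U) (w : W) : Prop :=
  I.Acceptable m w ∧
  (¬ MMatched M m ∨ ∃ w', (m, w') ∈ M ∧ I.mrank m w < I.mrank m w') ∧
  (¬ WMatched M w ∨ ∃ m', (m', w) ∈ M ∧ I.wrank w m < I.wrank w m')

/-- A stable matching: a matching admitting no blocking pair. -/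
def IsStable [DecidableEq U] [DecidableEq W] (I : SMI U W) (M : Set (U × W)) : Prop :=
  I.IsMatching M ∧ ∀ m w, ¬ I.Blocks M m w

/-- The man-degree `d_U(M)`: the largest rank of any man in `M`. -/
noncomputable def dU [DecidableEq W] (I : SMI U W) (M : Set (U × W)) : ℕ :=
  sSup {r : ℕ | ∃ p ∈ M, r = I.mrank p.1 p.2}

/-- The woman-degree `d_W(M)`: the largest rank of any woman in `M`. -/
noncomputable def dW [DecidableEq U] (I : SMI U W) (M : Set (U × W)) : ℕ :=
  sSup {r : ℕ | ∃ p ∈ M, r = I.wrank p.2 p.1}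

/-- The regret-equality score `r(M) = |d_U(M) - d_W(M)|`. -/
noncomputable def rScore [DecidableEq U] [DecidableEq W] (I : SMI U W) (M : Set (U × W)) : ℕ :=
  ((I.dU M : ℤ) - (I.dW M : ℤ)).natAbs

/-- `M0` is a man-optimal and woman-pessimal stable matching of `I`. -/
def ManOptWomanPess [DecidableEq U] [DecidableEq W] (I : SMI U W)
    (M0 : Set (U × W)) : Prop :=
  I.IsStable M0 ∧ ∀ M, I.IsStable M →
    (∀ m w0 w, (m, w0) ∈ M0 → (m, w) ∈ M → I.mrank m w0 ≤ I.mrank m w) ∧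
    (∀ w m0 m, (m0, w) ∈ M0 → (m, w) ∈ M → I.wrank w m ≤ I.wrank w m0)

/-- `Mz` is a woman-optimal and man-pessimal stable matching of `I`. -/
def WomanOptManPess [DecidableEq U] [DecidableEq W] (I : SMI U W)
    (Mz : Set (U × W)) : Prop :=
  I.IsStable Mz ∧ ∀ M, I.IsStable M →
    (∀ w mz m, (mz, w) ∈ Mz → (m, w) ∈ M → I.wrank w mz ≤ I.wrank w m) ∧
    (∀ m wz w, (m, wz) ∈ Mz → (m, w) ∈ M → I.mrank m w ≤ I.mrank m wz)

/-- The truncated instance `I_T` of `I` at rank `a`: every pair `(m, w)` with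
`rank(m, w) > a` is deleted, i.e. each man's list is cut after his `a`-th
choice, and he is removed from the lists of the women thereby deleted. -/
def truncate [DecidableEq W] (I : SMI U W) (a : ℕ) : SMI U W where
  mpref m := (I.mpref m).take a
  wpref w := (I.wpref w).filter (fun m => decide (w ∈ (I.mpref m).take a))
  mpref_nodup m := ((I.mpref m).take_sublist a).nodup (I.mpref_nodup m)
  wpref_nodup w := (I.wpref_nodup w).filter _

end SMI

/-!
Man-optimality gives every man a partner in `M0` no worse than in any stable `M`, and
since `M` is perfect this yields `d_U(M0) ≤ d_U(M)`; dually, woman-pessimality and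
perfectness of `M0` give `d_W(M) ≤ d_W(M0)`. Hence, when `d_W(M0) ≤ d_U(M0)`,
`r(M0) = d_U(M0) - d_W(M0) ≤ d_U(M) - d_W(M) ≤ r(M)`.
-/

theorem csSup_le_csSup_of_forall_exists_le {α : Type*} [ConditionallyCompleteLinearOrderBot α]
    {s t : Set α} (ht : BddAbove t) (h : ∀ x ∈ s, ∃ y ∈ t, x ≤ y) : sSup s ≤ sSup t := by
  rcases s.eq_empty_or_nonempty with rfl | hs
  · simp only [csSup_empty, bot_le]
  · refine csSup_le hs fun x hx => ?_
    obtain ⟨y, hy, hxy⟩ := h x hx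
    exact le_csSup_of_le ht hy hxy

namespace SMI

variable {U W : Type} (I : SMI U W)

theorem mrank_le_card_add_one [DecidableEq W] [Fintype W] (m : U) (w : W) :
    I.mrank m w ≤ Fintype.card W + 1 := by
  have hidx := (I.mpref m).idxOf_le_length (a := w)
  have hlen := (I.mpref_nodup m).length_le_card
  unfold mrank
  omega

theorem wrank_le_card_add_one [DecidableEq U] [Fintype U] (w : W) (m : U) :
    I.wrank w m ≤ Fintype.card U + 1 := by
  have hidx := (I.wpref w).idxOf_le_length (a := m)
  have hlen := (I.wpref_nodup w).length_le_card
  unfold wrank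
  omega

theorem dU_le_dU [DecidableEq W] [Fintype W] {M M' : Set (U × W)}
    (h : ∀ p ∈ M, ∃ q ∈ M', I.mrank p.1 p.2 ≤ I.mrank q.1 q.2) : I.dU M ≤ I.dU M' := by
  refine csSup_le_csSup_of_forall_exists_le ⟨Fintype.card W + 1, ?_⟩ ?_
  · rintro r ⟨q, -, rfl⟩
    exact I.mrank_le_card_add_one q.1 q.2
  · rintro r ⟨p, hp, rfl⟩
    obtain ⟨q, hq, hpq⟩ := h p hp
    exact ⟨_, ⟨q, hq, rfl⟩, hpq⟩

theorem dW_le_dW [DecidableEq U] [Fintype U] {M M' : Set (U × W)}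
    (h : ∀ p ∈ M, ∃ q ∈ M', I.wrank p.2 p.1 ≤ I.wrank q.2 q.1) : I.dW M ≤ I.dW M' := by
  refine csSup_le_csSup_of_forall_exists_le ⟨Fintype.card U + 1, ?_⟩ ?_
  · rintro r ⟨q, -, rfl⟩
    exact I.wrank_le_card_add_one q.2 q.1
  · rintro r ⟨p, hp, rfl⟩
    obtain ⟨q, hq, hpq⟩ := h p hp
    exact ⟨_, ⟨q, hq, rfl⟩, hpq⟩

variable {I} [DecidableEq U] [DecidableEq W]

theorem ManOptWomanPess.dU_le [Fintype W] {M0 M : Set (U × W)} (h0 : I.ManOptWomanPess M0)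
    (hM : I.IsStable M) (hperf : Perfect M) : I.dU M0 ≤ I.dU M :=
  I.dU_le_dU fun ⟨m, w0⟩ hp =>
    let ⟨w, hw⟩ := hperf.1 m
    ⟨(m, w), hw, (h0.2 M hM).1 m w0 w hp hw⟩

theorem ManOptWomanPess.dW_le [Fintype U] {M0 M : Set (U × W)} (h0 : I.ManOptWomanPess M0)
    (hperf : Perfect M0) (hM : I.IsStable M) : I.dW M ≤ I.dW M0 :=
  I.dW_le_dW fun ⟨m, w⟩ hp =>
    let ⟨m0, hm0⟩ := hperf.2 w
    ⟨(m0, w), hm0, (h0.2 M hM).2 w m0 m hm0 hp⟩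

end SMI

/-- If the man-optimal stable matching has man-degree at least its
woman-degree, then it is a regret-equal stable matching. -/
theorem stmt_1 {U W : Type} [Fintype U] [Fintype W] [DecidableEq U] [DecidableEq W]
    (I : SMI U W)
    (hperf : ∀ M : Set (U × W), I.IsStable M → SMI.Perfect M)
    (M0 : Set (U × W)) (h0 : I.ManOptWomanPess M0)
    (hge : I.dW M0 ≤ I.dU M0) :
    ∀ M : Set (U × W), I.IsStable M → I.rScore M0 ≤ I.rScore M := by
  intro M hM
  have hU := h0.dU_le hM (hperf M hM)
  have hW := h0.dW_le (hperf M0 h0.1) hM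
  unfold SMI.rScore
  omega
end

section
/- Let I be an SMI instance in which every stable matching matches every man and every woman, and let M_0 be a man-optimal and woman-pessimal stable matching of I. Write a_0 = d_U(M_0), b_0 = d_W(M_0) and suppose a_0 < b_0; set d_0 = b_0 − a_0. Then every stable matching M of I with r(M) < d_0 satisfies a_0 ≤ d_U(M) ≤ 2·b_0 − a_0 − 1 and d_U(M) − d_0 + 1 ≤ d_W(M) ≤ b_0. -/
/-! Man-optimality of `M₀` gives `a₀ ≤ d_U(M)` and its woman-pessimality gives `d_W(M) ≤ b₀`;
the other two bounds follow by combining these with `|d_U(M) - d_W(M)| < d₀`. -/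

namespace SMI

variable {U W : Type} [Finite U] [Finite W] {M M0 : Set (U × W)}

theorem mrank_le_dU [DecidableEq W] (I : SMI U W) {m : U} {w : W} (h : (m, w) ∈ M) :
    I.mrank m w ≤ I.dU M :=
  le_csSup (((Set.toFinite M).image _).bddAbove.mono <| by
    rintro _ ⟨p, hp, rfl⟩; exact ⟨p, hp, rfl⟩) ⟨_, h, rfl⟩

theorem wrank_le_dW [DecidableEq U] (I : SMI U W) {m : U} {w : W} (h : (m, w) ∈ M) :
    I.wrank w m ≤ I.dW M :=
  le_csSup (((Set.toFinite M).image _).bddAbove.mono <| by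
    rintro _ ⟨p, hp, rfl⟩; exact ⟨p, hp, rfl⟩) ⟨_, h, rfl⟩

variable [DecidableEq U] [DecidableEq W] {I : SMI U W}

theorem ManOptWomanPess.dU_le_s2 (h0 : I.ManOptWomanPess M0)
    (hM : I.IsStable M) (hmatched : ∀ m, MMatched M m) : I.dU M0 ≤ I.dU M :=
  csSup_le' <| by
    rintro _ ⟨⟨m, w0⟩, hmw0, rfl⟩
    obtain ⟨w, hw⟩ := hmatched m
    exact ((h0.2 M hM).1 m w0 w hmw0 hw).trans (I.mrank_le_dU hw)

theorem ManOptWomanPess.dW_le_s2 (h0 : I.ManOptWomanPess M0)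
    (hM : I.IsStable M) (hmatched0 : ∀ w, WMatched M0 w) : I.dW M ≤ I.dW M0 :=
  csSup_le' <| by
    rintro _ ⟨⟨m, w⟩, hmw, rfl⟩
    obtain ⟨m0, hm0⟩ := hmatched0 w
    exact ((h0.2 M hM).2 w m0 m hm0 hmw).trans (I.wrank_le_dW hm0)

end SMI

theorem stmt_2_general {U W : Type} [Fintype U] [Fintype W] [DecidableEq U] [DecidableEq W]
    (I : SMI U W)
    (hperf : ∀ M : Set (U × W), I.IsStable M → SMI.Perfect M)
    (M0 : Set (U × W)) (h0 : I.ManOptWomanPess M0) :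
    ∀ M : Set (U × W), I.IsStable M → I.rScore M < I.dW M0 - I.dU M0 →
      (I.dU M0 : ℤ) ≤ (I.dU M : ℤ) ∧
      (I.dU M : ℤ) ≤ 2 * (I.dW M0 : ℤ) - (I.dU M0 : ℤ) - 1 ∧
      (I.dU M : ℤ) - ((I.dW M0 : ℤ) - (I.dU M0 : ℤ)) + 1 ≤ (I.dW M : ℤ) ∧
      (I.dW M : ℤ) ≤ (I.dW M0 : ℤ) := by
  intro M hM hr
  have hU := h0.dU_le_s2 hM (hperf M hM).1
  have hW := h0.dW_le_s2 hM (hperf M0 h0.1).2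
  rw [SMI.rScore] at hr
  omega

/-- If `a_0 = d_U(M_0) < b_0 = d_W(M_0)` and `d_0 = b_0 - a_0`, then every
stable matching `M` with `r(M) < d_0` satisfies
`a_0 ≤ d_U(M) ≤ 2·b_0 - a_0 - 1` and `d_U(M) - d_0 + 1 ≤ d_W(M) ≤ b_0`. -/
theorem stmt_2 {U W : Type} [Fintype U] [Fintype W] [DecidableEq U] [DecidableEq W]
    (I : SMI U W)
    (hperf : ∀ M : Set (U × W), I.IsStable M → SMI.Perfect M)
    (M0 : Set (U × W)) (h0 : I.ManOptWomanPess M0)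
    (hlt : I.dU M0 < I.dW M0) :
    ∀ M : Set (U × W), I.IsStable M → I.rScore M < I.dW M0 - I.dU M0 →
      (I.dU M0 : ℤ) ≤ (I.dU M : ℤ) ∧
      (I.dU M : ℤ) ≤ 2 * (I.dW M0 : ℤ) - (I.dU M0 : ℤ) - 1 ∧
      (I.dU M : ℤ) - ((I.dW M0 : ℤ) - (I.dU M0 : ℤ)) + 1 ≤ (I.dW M : ℤ) ∧
      (I.dW M : ℤ) ≤ (I.dW M0 : ℤ) :=
  stmt_2_general I hperf M0 h0
end

section
/- Let I be an SMI instance in which every stable matching matches every man and every woman, and let M_0 be a man-optimal and woman-pessimal stable matching of I with a_0 = d_U(M_0) < b_0 = d_W(M_0). Then there exists a regret-equal stable matching M* of I (i.e., a stable matching minimising the regret-equality score r over all stable matchings of I) with d_U(M*) ≤ 2·b_0 − a_0 − 1. -/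
/-!
Woman-pessimality of `M₀` gives `d_W(M) ≤ b₀` for every stable `M`, hence
`d_U(M) ≤ d_W(M) + r(M) ≤ b₀ + r(M)`. A regret-equal stable matching `M*` exists since
scores are natural numbers. If `r(M*) < r(M₀) = b₀ - a₀`, this gives
`d_U(M*) ≤ 2 b₀ - a₀ - 1`; otherwise `M₀` is itself regret-equal and `a₀ < b₀` suffices.
-/

namespace SMI

variable {U W : Type} [DecidableEq U]

/-- `dW` is a supremum in `ℕ`, which is `0` for an unbounded set; a positive value rules
that out. -/
lemma wrank_le_dW_of_pos (I : SMI U W) {M : Set (U × W)} (hpos : 0 < I.dW M)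
    {m : U} {w : W} (hmw : (m, w) ∈ M) : I.wrank w m ≤ I.dW M := by
  have hbdd : BddAbove {r : ℕ | ∃ p ∈ M, r = I.wrank p.2 p.1} := by
    by_contra h
    exact hpos.ne' (Nat.sSup_of_not_bddAbove h)
  exact le_csSup hbdd ⟨(m, w), hmw, rfl⟩

variable [DecidableEq W]

lemma dW_le_of_manOptWomanPess (I : SMI U W) {M0 M : Set (U × W)}
    (h0 : I.ManOptWomanPess M0) (hmatched : ∀ w, WMatched M0 w) (hpos : 0 < I.dW M0)
    (hM : I.IsStable M) : I.dW M ≤ I.dW M0 := by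
  refine csSup_le' ?_
  rintro _ ⟨⟨m, w⟩, hmw, rfl⟩
  obtain ⟨m0, hm0⟩ := hmatched w
  exact ((h0.2 M hM).2 w m0 m hm0 hmw).trans (I.wrank_le_dW_of_pos hpos hm0)

lemma dU_le_dW_add_rScore (I : SMI U W) (M : Set (U × W)) :
    (I.dU M : ℤ) ≤ I.dW M + I.rScore M := by
  unfold rScore
  omega

lemma rScore_eq_of_dU_lt_dW (I : SMI U W) {M : Set (U × W)} (h : I.dU M < I.dW M) :
    (I.rScore M : ℤ) = I.dW M - I.dU M := by
  unfold rScore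
  omega

lemma exists_isStable_rScore_min (I : SMI U W) {M0 : Set (U × W)} (h0 : I.IsStable M0) :
    ∃ Mstar, I.IsStable Mstar ∧ ∀ M, I.IsStable M → I.rScore Mstar ≤ I.rScore M := by
  obtain ⟨Mstar, hstar, hmin⟩ :=
    (InvImage.wf I.rScore wellFounded_lt).has_min {M | I.IsStable M} ⟨M0, h0⟩
  exact ⟨Mstar, hstar, fun M hM => not_lt.mp (hmin M hM)⟩

end SMI

theorem stmt_3_general {U W : Type} [DecidableEq U] [DecidableEq W]
    (I : SMI U W)
    (hperf : ∀ M : Set (U × W), I.IsStable M → SMI.Perfect M)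
    (M0 : Set (U × W)) (h0 : I.ManOptWomanPess M0)
    (hlt : I.dU M0 < I.dW M0) :
    ∃ Mstar : Set (U × W), I.IsStable Mstar ∧
      (∀ M : Set (U × W), I.IsStable M → I.rScore Mstar ≤ I.rScore M) ∧
      (I.dU Mstar : ℤ) ≤ 2 * (I.dW M0 : ℤ) - (I.dU M0 : ℤ) - 1 := by
  obtain ⟨Mstar, hstar, hmin⟩ := I.exists_isStable_rScore_min h0.1
  have hr0 := I.rScore_eq_of_dU_lt_dW hlt
  by_cases hbetter : I.rScore Mstar < I.rScore M0
  · have hdW := I.dW_le_of_manOptWomanPess h0 (hperf M0 h0.1).2 (by omega) hstar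
    have hdU := I.dU_le_dW_add_rScore Mstar
    exact ⟨Mstar, hstar, hmin, by omega⟩
  · refine ⟨M0, h0.1, fun M hM => (not_lt.mp hbetter).trans (hmin M hM), ?_⟩
    omega

/-- If `a_0 = d_U(M_0) < b_0 = d_W(M_0)` then there is a regret-equal stable
matching `M*` with `d_U(M*) ≤ 2·b_0 - a_0 - 1`. -/
theorem stmt_3 {U W : Type} [Fintype U] [Fintype W] [DecidableEq U] [DecidableEq W]
    (I : SMI U W)
    (hperf : ∀ M : Set (U × W), I.IsStable M → SMI.Perfect M)
    (M0 : Set (U × W)) (h0 : I.ManOptWomanPess M0)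
    (hlt : I.dU M0 < I.dW M0) :
    ∃ Mstar : Set (U × W), I.IsStable Mstar ∧
      (∀ M : Set (U × W), I.IsStable M → I.rScore Mstar ≤ I.rScore M) ∧
      (I.dU Mstar : ℤ) ≤ 2 * (I.dW M0 : ℤ) - (I.dU M0 : ℤ) - 1 :=
  stmt_3_general I hperf M0 h0 hlt
end

section
/- Let I be an SMI instance, let a be a positive integer, and let I_T be the truncated instance of I at rank a. If M' is a stable matching of I_T that matches every man, then M' is a stable matching of I, and rank(m, M'(m)) ≤ a for every man m. -/
namespace List

variable {α : Type*} [DecidableEq α]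

theorem Sublist.idxOf_lt_idxOf {l₁ l₂ : List α} (h : l₁ <+ l₂) (hnd : l₂.Nodup) {x y : α}
    (hx : x ∈ l₁) (hy : y ∈ l₁) (hxy : l₂.idxOf x < l₂.idxOf y) :
    l₁.idxOf x < l₁.idxOf y := by
  induction h with
  | slnil => simp at hx
  | @cons l₁ l₂ b h ih =>
    obtain ⟨hb, hnd⟩ := nodup_cons.1 hnd
    have hxb : b ≠ x := fun hbx => hb (hbx ▸ h.subset hx)
    have hyb : b ≠ y := fun hby => hb (hby ▸ h.subset hy)
    rw [idxOf_cons_ne _ hxb, idxOf_cons_ne _ hyb] at hxy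
    exact ih hnd hx hy (Nat.succ_lt_succ_iff.1 hxy)
  | @cons_cons l₁ l₂ b h ih =>
    obtain ⟨-, hnd⟩ := nodup_cons.1 hnd
    by_cases hxb : b = x
    · subst hxb
      have hyb : b ≠ y := by rintro rfl; exact lt_irrefl _ hxy
      simp [idxOf_cons_ne _ hyb]
    · have hyb : b ≠ y := by rintro rfl; simp at hxy
      rw [idxOf_cons_ne _ hxb, idxOf_cons_ne _ hyb] at hxy ⊢
      exact Nat.succ_lt_succ (ih hnd ((mem_cons.1 hx).resolve_left (Ne.symm hxb))
        ((mem_cons.1 hy).resolve_left (Ne.symm hyb)) (Nat.succ_lt_succ_iff.1 hxy))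

end List

namespace SMI

variable {U W : Type} [DecidableEq W] {I : SMI U W} {a : ℕ} {m m' : U} {w : W}

theorem mem_truncate_mpref_iff :
    w ∈ (I.truncate a).mpref m ↔ w ∈ I.mpref m ∧ I.mrank m w ≤ a := by
  refine ⟨fun h => ?_, fun ⟨hw, hr⟩ => ?_⟩
  · have hw := List.mem_of_mem_take h
    exact ⟨hw, Nat.succ_le_of_lt ((List.mem_take_iff_idxOf_lt hw).1 h)⟩
  · exact (List.mem_take_iff_idxOf_lt hw).2 hr

theorem truncate_mrank (h : w ∈ (I.truncate a).mpref m) :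
    (I.truncate a).mrank m w = I.mrank m w :=
  congrArg (· + 1) (((I.mpref m).take_prefix a).idxOf_eq_of_mem h)

theorem mem_truncate_wpref_iff :
    m ∈ (I.truncate a).wpref w ↔ m ∈ I.wpref w ∧ w ∈ (I.truncate a).mpref m := by
  simp [truncate]

theorem truncate_acceptable_iff :
    (I.truncate a).Acceptable m w ↔ I.Acceptable m w ∧ I.mrank m w ≤ a := by
  rw [Acceptable, Acceptable, mem_truncate_wpref_iff, mem_truncate_mpref_iff]
  tauto

theorem truncate_wrank_lt [DecidableEq U] (hm : m ∈ (I.truncate a).wpref w)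
    (hm' : m' ∈ (I.truncate a).wpref w) (h : I.wrank w m < I.wrank w m') :
    (I.truncate a).wrank w m < (I.truncate a).wrank w m' :=
  Nat.succ_lt_succ <| List.filter_sublist.idxOf_lt_idxOf (I.wpref_nodup w) hm hm'
    (Nat.succ_lt_succ_iff.1 h)

variable {M : Set (U × W)}

theorem mrank_le_of_mem_of_truncate (hM : (I.truncate a).IsMatching M)
    (h : (m, w) ∈ M) : I.mrank m w ≤ a :=
  (mem_truncate_mpref_iff.1 (hM.1 _ h).1).2

theorem IsMatching.of_truncate (hM : (I.truncate a).IsMatching M) : I.IsMatching M :=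
  ⟨fun p hp => (truncate_acceptable_iff.1 (hM.1 p hp)).1, hM.2⟩

/-- Since `m` is matched in `M` within his first `a` choices, any woman he prefers to his
partner also lies within his first `a` choices, so the blocking pair survives truncation. -/
theorem Blocks.truncate [DecidableEq U] (hM : (I.truncate a).IsMatching M)
    (hm : MMatched M m) (h : I.Blocks M m w) : (I.truncate a).Blocks M m w := by
  obtain ⟨hacc, hman | ⟨w', hw', hlt⟩, hwoman⟩ := h
  · exact absurd hm hman
  have hw'a := hM.1 _ hw'
  have hwa : (I.truncate a).Acceptable m w :=
    truncate_acceptable_iff.2 ⟨hacc, hlt.le.trans (mrank_le_of_mem_of_truncate hM hw')⟩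
  refine ⟨hwa, Or.inr ⟨w', hw', ?_⟩, ?_⟩
  · rwa [truncate_mrank hwa.1, truncate_mrank hw'a.1]
  · obtain hfree | ⟨m'', hm'', hlt'⟩ := hwoman
    · exact Or.inl hfree
    · exact Or.inr ⟨m'', hm'', truncate_wrank_lt hwa.2 (hM.1 _ hm'').2 hlt'⟩

theorem IsStable.of_truncate [DecidableEq U] (h : (I.truncate a).IsStable M)
    (hall : ∀ m, MMatched M m) : I.IsStable M :=
  ⟨h.1.of_truncate, fun m w hb => h.2 m w (hb.truncate h.1 (hall m))⟩

end SMI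

theorem stmt_4_general {U W : Type} [DecidableEq U] [DecidableEq W]
    (I : SMI U W) (a : ℕ)
    (M' : Set (U × W)) (hM' : (I.truncate a).IsStable M')
    (hall : ∀ m : U, SMI.MMatched M' m) :
    I.IsStable M' ∧ ∀ (m : U) (w : W), (m, w) ∈ M' → I.mrank m w ≤ a :=
  ⟨hM'.of_truncate hall, fun _ _ => SMI.mrank_le_of_mem_of_truncate hM'.1⟩

/-- A stable matching of the truncated instance `I_T` matching every man is a
stable matching of `I`, in which every man has rank at most `a`. -/
theorem stmt_4 {U W : Type} [Fintype U] [Fintype W] [DecidableEq U] [DecidableEq W]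
    (I : SMI U W) (a : ℕ) (ha : 0 < a)
    (M' : Set (U × W)) (hM' : (I.truncate a).IsStable M')
    (hall : ∀ m : U, SMI.MMatched M' m) :
    I.IsStable M' ∧ ∀ (m : U) (w : W), (m, w) ∈ M' → I.mrank m w ≤ a :=
  stmt_4_general I a M' hM' hall
end

section
/- Let M and N be stable matchings of an SMI instance I, each matching every man and every woman. If rank(w, N(w)) ≤ rank(w, M(w)) for every woman w, then rank(m, M(m)) ≤ rank(m, N(m)) for every man m. -/
namespace SMI

variable {U W : Type}

theorem wrank_inj [DecidableEq U] (I : SMI U W) {w : W} {m m' : U} (hm : m ∈ I.wpref w) :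
    I.wrank w m = I.wrank w m' ↔ m = m' :=
  Nat.succ_inj.trans (List.idxOf_inj hm)

theorem IsMatching.snd_eq {I : SMI U W} {M : Set (U × W)} (hM : I.IsMatching M)
    {m : U} {w w' : W} (hw : (m, w) ∈ M) (hw' : (m, w') ∈ M) : w = w' :=
  congrArg Prod.snd (hM.2.1 _ hw _ hw' rfl)

theorem IsStable.wrank_partner_le [DecidableEq U] [DecidableEq W] {I : SMI U W}
    {M : Set (U × W)} (hM : I.IsStable M) {m m' : U} {w w' : W}
    (hmw : (m, w) ∈ M) (hm'w' : (m', w') ∈ M) (hacc : I.Acceptable m w')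
    (hpref : I.mrank m w' < I.mrank m w) : I.wrank w' m' ≤ I.wrank w' m :=
  not_lt.mp fun hlt => hM.2 m w' ⟨hacc, Or.inr ⟨w, hmw, hpref⟩, Or.inr ⟨m', hm'w', hlt⟩⟩

end SMI

theorem stmt_7_general {U W : Type} [DecidableEq U] [DecidableEq W]
    (I : SMI U W)
    (M N : Set (U × W)) (hM : I.IsStable M) (hN : I.IsStable N)
    (hMp : SMI.Perfect M)
    (h : ∀ (w : W) (m m' : U), (m, w) ∈ N → (m', w) ∈ M → I.wrank w m ≤ I.wrank w m') :
    ∀ (m : U) (w w' : W), (m, w) ∈ M → (m, w') ∈ N → I.mrank m w ≤ I.mrank m w' := by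
  intro m w w' hmw hmw'
  by_contra! hpref
  obtain ⟨m', hm'w'⟩ := hMp.2 w'
  have hacc : I.Acceptable m w' := hN.1.1 _ hmw'
  have hrank : I.wrank w' m = I.wrank w' m' :=
    (h w' m m' hmw' hm'w').antisymm (hM.wrank_partner_le hmw hm'w' hacc hpref)
  obtain rfl : m = m' := (I.wrank_inj hacc.2).mp hrank
  exact hpref.ne (congrArg _ (hM.1.snd_eq hmw hm'w').symm)

/-- If every woman is weakly better off in `N` than in `M` (both stable and
perfect), then every man is weakly better off in `M` than in `N`. -/
theorem stmt_7 {U W : Type} [Fintype U] [Fintype W] [DecidableEq U] [DecidableEq W]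
    (I : SMI U W)
    (M N : Set (U × W)) (hM : I.IsStable M) (hN : I.IsStable N)
    (hMp : SMI.Perfect M) (hNp : SMI.Perfect N)
    (h : ∀ (w : W) (m m' : U), (m, w) ∈ N → (m', w) ∈ M → I.wrank w m ≤ I.wrank w m') :
    ∀ (m : U) (w w' : W), (m, w) ∈ M → (m, w') ∈ N → I.mrank m w ≤ I.mrank m w' :=
  stmt_7_general I M N hM hN hMp h
end
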